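/- The determinant of the 3×3 matrix with rows (2x₂, 3x₃, 4x₄), (x₃, x₄, 12x₂x₃), ((2/3)x₄ - 2x₂², 3x₂x₃, 2x₂x₄ + 3x₃²) equals 4·det T, where T is the 2×2 matrix ((4λ₄, 6λ₆), (6λ₆, -(4/3)λ₄²)) with λ₄ = -3x₂² + (1/2)x₄ and λ₆ = 2x₂³ + (1/4)x₃² - (1/2)x₂x₄ substituted. -/
import Mathlib

open MvPolynomial

noncomputable abbrev x2 : MvPolynomial (Fin 3) ℂ := X 0
noncomputable abbrev x3 : MvPolynomial (Fin 3) ℂ := X 1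
noncomputable abbrev x4 : MvPolynomial (Fin 3) ℂ := X 2

/-- `p*(λ₄) = -3x₂² + (1/2)x₄`. -/
noncomputable def pl4 : MvPolynomial (Fin 3) ℂ := -3 * x2 ^ 2 + (1 / 2 : ℂ) • x4

/-- `p*(λ₆) = 2x₂³ + (1/4)x₃² - (1/2)x₂x₄`. -/
noncomputable def pl6 : MvPolynomial (Fin 3) ℂ :=
  2 * x2 ^ 3 + (1 / 4 : ℂ) • x3 ^ 2 - (1 / 2 : ℂ) • (x2 * x4)

/-- The matrix `𝓣` of the genus 1 vector fields. -/
noncomputable def calT : Matrix (Fin 3) (Fin 3) (MvPolynomial (Fin 3) ℂ) :=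
  Matrix.of
    ![![2 * x2, 3 * x3, 4 * x4],
      ![x3, x4, 12 * x2 * x3],
      ![(2 / 3 : ℂ) • x4 - 2 * x2 ^ 2, 3 * x2 * x3, 2 * x2 * x4 + 3 * x3 ^ 2]]

/-- The matrix `T` pulled back along `p`. -/
noncomputable def Tpulled : Matrix (Fin 2) (Fin 2) (MvPolynomial (Fin 3) ℂ) :=
  Matrix.of
    ![![4 * pl4, 6 * pl6],
      ![6 * pl6, -(4 / 3 : ℂ) • pl4 ^ 2]]

lemma onat (n : ℕ) [n.AtLeastTwo] :
    (OfNat.ofNat n : MvPolynomial (Fin 3) ℂ) = C (OfNat.ofNat n : ℂ) :=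
  (map_ofNat C n).symm

/-- `det 𝓣 = 4 · det T` after substituting `λ₄`, `λ₆` along `p`. -/
theorem det_calT_eq : calT.det = 4 * Tpulled.det := by
  simp only [calT, Tpulled, pl4, pl6, Matrix.det_fin_three, Matrix.det_fin_two,
    Matrix.of_apply, Matrix.cons_val_zero, Matrix.cons_val_one, Matrix.cons_val_two,
    Matrix.head_cons, Matrix.tail_cons, smul_eq_C_mul]
  ring_nf
  simp only [onat, mul_assoc, ← C_mul, ← C_pow]
  norm_num
  simp only [map_ofNat]
  ring
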